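/- If F is ⪯ˡ_K-convex, then the scalarizing functional f_{l,x̄} is convex. If moreover F is locally l-bounded at x̄, then x̄ belongs to the interior of the effective domain of f_{l,x̄}, and f_{l,x̄} is finite and continuous at x̄. -/

import Mathlib

open Set Topology Metric Pointwise

/-- The Gerstewitz (Tammer) scalarizing functional `Ψ_e(y) = inf {t : y ∈ t•e - K}`. -/
noncomputable def psiE {Y : Type*} [NormedAddCommGroup Y] [NormedSpace ℝ Y]
    (K : Set Y) (e : Y) (y : Y) : ℝ :=
  sInf {t : ℝ | t • e - y ∈ K}

/-- The lower inner function `g_l(x,z) = inf_{y ∈ F x} Ψ_e (y - z)` (with values in `EReal`). -/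
noncomputable def glow {X Y : Type*} [NormedAddCommGroup X] [NormedSpace ℝ X]
    [NormedAddCommGroup Y] [NormedSpace ℝ Y]
    (K : Set Y) (e : Y) (F : X → Set Y) (x : X) (z : Y) : EReal :=
  ⨅ y ∈ F x, (psiE K e (y - z) : EReal)

/-- The upper inner function `g_{u,x̄}(y) = inf_{ȳ ∈ F x̄} Ψ_e (y - ȳ)`. -/
noncomputable def gupp {X Y : Type*} [NormedAddCommGroup X] [NormedSpace ℝ X]
    [NormedAddCommGroup Y] [NormedSpace ℝ Y]
    (K : Set Y) (e : Y) (F : X → Set Y) (xbar : X) (y : Y) : EReal :=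
  ⨅ yb ∈ F xbar, (psiE K e (y - yb) : EReal)

/-- The lower scalarizing functional `f_{l,x̄}(x) = sup_{ȳ ∈ F x̄} g_l(x, ȳ)`. -/
noncomputable def flow {X Y : Type*} [NormedAddCommGroup X] [NormedSpace ℝ X]
    [NormedAddCommGroup Y] [NormedSpace ℝ Y]
    (K : Set Y) (e : Y) (F : X → Set Y) (xbar : X) (x : X) : EReal :=
  ⨆ yb ∈ F xbar, glow K e F x yb

/-- The upper scalarizing functional `f_{u,x̄}(x) = sup_{y ∈ F x} g_{u,x̄}(y)`. -/
noncomputable def fupp {X Y : Type*} [NormedAddCommGroup X] [NormedSpace ℝ X]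
    [NormedAddCommGroup Y] [NormedSpace ℝ Y]
    (K : Set Y) (e : Y) (F : X → Set Y) (xbar : X) (x : X) : EReal :=
  ⨆ y ∈ F x, gupp K e F xbar y

/-- Weakly minimal elements: `WMin(A,K) = {a ∈ A : (a - int K) ∩ A = ∅}`. -/
def wMinSet {Y : Type*} [NormedAddCommGroup Y] (A K : Set Y) : Set Y :=
  {a ∈ A | ∀ b ∈ A, a - b ∉ interior K}

/-- Weakly maximal elements: `WMax(A,K) = {a ∈ A : (a + int K) ∩ A = ∅}`. -/
def wMaxSet {Y : Type*} [NormedAddCommGroup Y] (A K : Set Y) : Set Y :=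
  {a ∈ A | ∀ b ∈ A, b - a ∉ interior K}

/-- Minimal elements: `Min(A,K) = {a ∈ A : (a - K) ∩ A = {a}}`. -/
def minSet {Y : Type*} [AddGroup Y] (A K : Set Y) : Set Y :=
  {a ∈ A | ∀ b ∈ A, a - b ∈ K → b = a}

/-!
`Ψ_e` is finite, monotone along `K` and convex; the infimum defining it is attained since `K` is
closed. `⪯ˡ_K`-convexity of `F` turns near-optimal `y₁ ∈ F x₁`, `y₂ ∈ F x₂` into a point of
`F (t x₁ + (1 - t) x₂)` lying below `t y₁ + (1 - t) y₂`, which yields the convexity inequality for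
every inner infimum, hence for `f_{l,x̄}`. Local `l`-boundedness lets one replace the points of
`F x` and `F x̄` by points of the order interval `[-μe, μe]` lying below them, so that
`|f_{l,x̄}| ≤ 2μ` near `x̄`; a convex function that is finite and bounded above near a point is
continuous there.
-/

section Gerstewitz

variable {Y : Type*} [NormedAddCommGroup Y] [NormedSpace ℝ Y] {K : Set Y} {e : Y}

lemma add_mem_of_convex_of_smul_mem (hKcv : Convex ℝ K)
    (hKcone : ∀ t : ℝ, 0 ≤ t → ∀ y ∈ K, t • y ∈ K) {a b : Y} (ha : a ∈ K) (hb : b ∈ K) :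
    a + b ∈ K := by
  convert hKcone 2 zero_le_two _ (hKcv ha hb (by norm_num : (0:ℝ) ≤ 1/2)
    (by norm_num : (0:ℝ) ≤ 1/2) (by norm_num)) using 1
  module

lemma exists_smul_sub_mem (hKcone : ∀ t : ℝ, 0 ≤ t → ∀ y ∈ K, t • y ∈ K)
    (he : e ∈ interior K) (y : Y) : ∃ t > (0 : ℝ), t • e - y ∈ K := by
  have hcont : Continuous fun s : ℝ => e - s • y := by fun_prop
  have hlim : Filter.Tendsto (fun s : ℝ => e - s • y) (𝓝 0) (𝓝 e) := by
    simpa using hcont.tendsto 0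
  obtain ⟨s, hs, hsK⟩ := (hlim.eventually (mem_interior_iff_mem_nhds.mp he)).exists_gt
  refine ⟨s⁻¹, inv_pos.mpr hs, ?_⟩
  convert hKcone s⁻¹ (inv_nonneg.mpr hs.le) _ hsK using 1
  rw [smul_sub, smul_smul, inv_mul_cancel₀ hs.ne', one_smul]

lemma ne_zero_of_mem_interior [Nontrivial Y] (hKcone : ∀ t : ℝ, 0 ≤ t → ∀ y ∈ K, t • y ∈ K)
    (hKpt : K ∩ (-K) = {0}) (he : e ∈ interior K) : e ≠ 0 := by
  rintro rfl
  obtain ⟨y, hy⟩ := exists_ne (0 : Y)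
  have hneg : ∀ z : Y, -z ∈ K := fun z => by
    obtain ⟨t, -, ht⟩ := exists_smul_sub_mem hKcone he z
    simpa using ht
  have : y ∈ K ∩ (-K) := ⟨by simpa using hneg (-y), hneg y⟩
  exact hy (by simpa [hKpt] using this)

lemma neg_le_of_smul_sub_mem_of_add_smul_mem [Nontrivial Y]
    (hKadd : ∀ a ∈ K, ∀ b ∈ K, a + b ∈ K) (hKcone : ∀ t : ℝ, 0 ≤ t → ∀ y ∈ K, t • y ∈ K)
    (hKpt : K ∩ (-K) = {0}) (he : e ∈ interior K) {a : Y} {t c : ℝ} (ht : t • e - a ∈ K)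
    (hc : a + c • e ∈ K) : -c ≤ t := by
  by_contra! hlt
  have hpos : (t + c) • e ∈ K := by
    convert hKadd _ ht _ hc using 1
    module
  have hneg : -((t + c) • e) ∈ K := by
    rw [← neg_smul]
    exact hKcone _ (by linarith) e (interior_subset he)
  have hzero : (t + c) • e ∈ K ∩ (-K) := ⟨hpos, by simpa using hneg⟩
  rw [hKpt, mem_singleton_iff] at hzero
  rcases smul_eq_zero.mp hzero with h | h
  · linarith
  · exact ne_zero_of_mem_interior hKcone hKpt he h

lemma bddBelow_setOf_smul_sub_mem [Nontrivial Y] (hKadd : ∀ a ∈ K, ∀ b ∈ K, a + b ∈ K)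
    (hKcone : ∀ t : ℝ, 0 ≤ t → ∀ y ∈ K, t • y ∈ K) (hKpt : K ∩ (-K) = {0})
    (he : e ∈ interior K) (a : Y) : BddBelow {t : ℝ | t • e - a ∈ K} := by
  obtain ⟨s, -, hs⟩ := exists_smul_sub_mem hKcone he (-a)
  refine ⟨-s, fun t ht => neg_le_of_smul_sub_mem_of_add_smul_mem hKadd hKcone hKpt he ht ?_⟩
  simpa [add_comm] using hs

/-- In the zero space the defining set of `psiE` is all of `ℝ`, and `sInf` takes its junk value
`0`; this is why the bounds below assume `0 ≤ c`. -/
lemma psiE_eq_zero [Subsingleton Y] (he : e ∈ interior K) (a : Y) : psiE K e a = 0 := by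
  have hK : ∀ y : Y, y ∈ K := fun y => Subsingleton.elim e y ▸ interior_subset he
  simp [psiE, hK]

lemma psiE_smul_sub_mem [Nontrivial Y] (hKcl : IsClosed K) (hKadd : ∀ a ∈ K, ∀ b ∈ K, a + b ∈ K)
    (hKcone : ∀ t : ℝ, 0 ≤ t → ∀ y ∈ K, t • y ∈ K) (hKpt : K ∩ (-K) = {0})
    (he : e ∈ interior K) (a : Y) : psiE K e a • e - a ∈ K := by
  obtain ⟨t, -, ht⟩ := exists_smul_sub_mem hKcone he a
  exact (hKcl.preimage (by fun_prop : Continuous fun t : ℝ => t • e - a)).csInf_mem ⟨t, ht⟩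
    (bddBelow_setOf_smul_sub_mem hKadd hKcone hKpt he a)

lemma psiE_le_psiE_add (hKcl : IsClosed K) (hKadd : ∀ a ∈ K, ∀ b ∈ K, a + b ∈ K)
    (hKcone : ∀ t : ℝ, 0 ≤ t → ∀ y ∈ K, t • y ∈ K) (hKpt : K ∩ (-K) = {0})
    (he : e ∈ interior K) (a : Y) {k : Y} (hk : k ∈ K) : psiE K e a ≤ psiE K e (a + k) := by
  rcases subsingleton_or_nontrivial Y with _ | _
  · simp [psiE_eq_zero he]
  · refine csInf_le (bddBelow_setOf_smul_sub_mem hKadd hKcone hKpt he a) (show _ - a ∈ K from ?_)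
    convert hKadd _ (psiE_smul_sub_mem hKcl hKadd hKcone hKpt he (a + k)) _ hk using 1
    abel

lemma convexOn_psiE (hKcl : IsClosed K) (hKadd : ∀ a ∈ K, ∀ b ∈ K, a + b ∈ K)
    (hKcone : ∀ t : ℝ, 0 ≤ t → ∀ y ∈ K, t • y ∈ K) (hKpt : K ∩ (-K) = {0})
    (he : e ∈ interior K) : ConvexOn ℝ univ (psiE K e) := by
  refine ⟨convex_univ, fun a _ b _ s u hs hu _ => ?_⟩
  rcases subsingleton_or_nontrivial Y with _ | _
  · simp [psiE_eq_zero he]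
  · refine csInf_le (bddBelow_setOf_smul_sub_mem hKadd hKcone hKpt he _) (show _ - _ ∈ K from ?_)
    convert hKadd _ (hKcone s hs _ (psiE_smul_sub_mem hKcl hKadd hKcone hKpt he a))
      _ (hKcone u hu _ (psiE_smul_sub_mem hKcl hKadd hKcone hKpt he b)) using 1
    simp only [smul_eq_mul]
    module

lemma psiE_le_of_smul_sub_mem (hKadd : ∀ a ∈ K, ∀ b ∈ K, a + b ∈ K)
    (hKcone : ∀ t : ℝ, 0 ≤ t → ∀ y ∈ K, t • y ∈ K) (hKpt : K ∩ (-K) = {0})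
    (he : e ∈ interior K) {a : Y} {c : ℝ} (hc : 0 ≤ c) (h : c • e - a ∈ K) :
    psiE K e a ≤ c := by
  rcases subsingleton_or_nontrivial Y with _ | _
  · simpa [psiE_eq_zero he] using hc
  · exact csInf_le (bddBelow_setOf_smul_sub_mem hKadd hKcone hKpt he a) h

lemma neg_le_psiE_of_add_smul_mem (hKadd : ∀ a ∈ K, ∀ b ∈ K, a + b ∈ K)
    (hKcone : ∀ t : ℝ, 0 ≤ t → ∀ y ∈ K, t • y ∈ K) (hKpt : K ∩ (-K) = {0})
    (he : e ∈ interior K) {a : Y} {c : ℝ} (hc : 0 ≤ c) (h : a + c • e ∈ K) :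
    -c ≤ psiE K e a := by
  rcases subsingleton_or_nontrivial Y with _ | _
  · simpa [psiE_eq_zero he] using hc
  · obtain ⟨t, -, ht⟩ := exists_smul_sub_mem hKcone he a
    exact le_csInf ⟨t, ht⟩ fun s hs =>
      neg_le_of_smul_sub_mem_of_add_smul_mem hKadd hKcone hKpt he hs h

end Gerstewitz

lemma mem_inter_add_of_inter_add_eq {Y : Type*} [AddZeroClass Y] {A B C : Set Y}
    (h : A ∩ B + C = A + C) (hC : (0 : Y) ∈ C) {y : Y} (hy : y ∈ A) : y ∈ A ∩ B + C :=
  h ▸ ⟨y, hy, 0, hC, add_zero y⟩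

lemma continuousAt_of_convex_epigraph {X : Type*} [NormedAddCommGroup X] [NormedSpace ℝ X]
    {f : X → EReal} (hf : Convex ℝ {p : X × ℝ | f p.1 ≤ p.2}) {x₀ : X} {M : ℝ}
    (hbdd : ∀ᶠ x in 𝓝 x₀, f x ≠ ⊥ ∧ f x ≤ M) : ContinuousAt f x₀ := by
  obtain ⟨ρ, hρ, hball⟩ := Metric.eventually_nhds_iff_ball.mp hbdd
  set g : X → ℝ := fun x => (f x).toReal
  have hfg : ∀ x ∈ ball x₀ ρ, (g x : EReal) = f x := fun x hx =>
    EReal.coe_toReal (ne_top_of_le_ne_top (EReal.coe_ne_top M) (hball x hx).2) (hball x hx).1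
  have hg : ConvexOn ℝ (ball x₀ ρ) g := by
    rw [convexOn_iff_convex_epigraph]
    convert ((convex_ball x₀ ρ).prod convex_univ).inter hf using 1
    ext ⟨x, r⟩
    simp only [mem_ofPred_eq, mem_inter_iff, mem_prod, mem_univ, and_true]
    exact and_congr_right fun hx => by rw [← hfg x hx, EReal.coe_le_coe_iff]
  have hgM : (𝓝 x₀).IsBoundedUnder (· ≤ ·) g := by
    refine Filter.isBoundedUnder_of_eventually_le (a := M) ?_
    filter_upwards [ball_mem_nhds x₀ hρ] with x hx
    exact EReal.coe_le_coe_iff.mp ((hfg x hx).trans_le (hball x hx).2)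
  have hgc : ContinuousOn g (ball x₀ ρ) := by
    have := (hg.continuousOn_tfae isOpen_ball ⟨x₀, mem_ball_self hρ⟩).out 3 1
    exact this.mp ⟨x₀, mem_ball_self hρ, hgM⟩
  refine (continuous_coe_real_ereal.continuousAt.comp
    (hgc.continuousAt (ball_mem_nhds x₀ hρ))).congr ?_
  filter_upwards [ball_mem_nhds x₀ hρ] with x hx using hfg x hx

section ScalarizingFunctional

variable {X Y : Type*} [NormedAddCommGroup X] [NormedSpace ℝ X] [NormedAddCommGroup Y]
  [NormedSpace ℝ Y] {K : Set Y} {e : Y} {F : X → Set Y}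

lemma glow_convex_combination_le (hKcl : IsClosed K) (hKadd : ∀ a ∈ K, ∀ b ∈ K, a + b ∈ K)
    (hKcone : ∀ t : ℝ, 0 ≤ t → ∀ y ∈ K, t • y ∈ K) (hKpt : K ∩ (-K) = {0})
    (he : e ∈ interior K)
    (hconv : ∀ x₁ x₂ : X, (F x₁).Nonempty → (F x₂).Nonempty → ∀ t : ℝ, t ∈ Set.Ioo (0:ℝ) 1 →
      t • F x₁ + (1 - t) • F x₂ ⊆ F (t • x₁ + (1 - t) • x₂) + K)
    {x₁ x₂ : X} {t : ℝ} (ht : t ∈ Ioo (0 : ℝ) 1) {z : Y} {r s : ℝ}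
    (h₁ : glow K e F x₁ z ≤ r) (h₂ : glow K e F x₂ z ≤ s) :
    glow K e F (t • x₁ + (1 - t) • x₂) z ≤ ↑(t * r + (1 - t) * s) := by
  refine EReal.le_of_forall_lt_iff_le.mp fun c hc => ?_
  set δ := c - (t * r + (1 - t) * s)
  have hδ : 0 < δ := sub_pos.mpr (EReal.coe_lt_coe_iff.mp hc)
  obtain ⟨y₁, hy₁, hψ₁⟩ : ∃ y ∈ F x₁, psiE K e (y - z) < r + δ := by
    have : glow K e F x₁ z < ↑(r + δ) := h₁.trans_lt (EReal.coe_lt_coe_iff.mpr (by linarith))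
    simpa [glow, iInf_lt_iff, ← EReal.coe_add] using this
  obtain ⟨y₂, hy₂, hψ₂⟩ : ∃ y ∈ F x₂, psiE K e (y - z) < s + δ := by
    have : glow K e F x₂ z < ↑(s + δ) := h₂.trans_lt (EReal.coe_lt_coe_iff.mpr (by linarith))
    simpa [glow, iInf_lt_iff, ← EReal.coe_add] using this
  obtain ⟨y, hy, k, hk, hyk⟩ := hconv x₁ x₂ ⟨y₁, hy₁⟩ ⟨y₂, hy₂⟩ t ht
    (add_mem_add (smul_mem_smul_set hy₁) (smul_mem_smul_set hy₂))
  have hcomb : y - z + k = t • (y₁ - z) + (1 - t) • (y₂ - z) := by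
    rw [sub_add_eq_add_sub, show y + k = _ from hyk]
    module
  have hψ : psiE K e (y - z) ≤ c := calc
    psiE K e (y - z) ≤ psiE K e (y - z + k) := psiE_le_psiE_add hKcl hKadd hKcone hKpt he _ hk
    _ ≤ t * psiE K e (y₁ - z) + (1 - t) * psiE K e (y₂ - z) := by
      rw [hcomb]
      exact (convexOn_psiE hKcl hKadd hKcone hKpt he).2 (mem_univ _) (mem_univ _) ht.1.le
        (by linarith [ht.2]) (by ring)
    _ ≤ c := by nlinarith [ht.1, ht.2]
  exact (iInf₂_le y hy).trans (EReal.coe_le_coe_iff.mpr hψ)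

lemma flow_convex_combination_le (hKcl : IsClosed K) (hKadd : ∀ a ∈ K, ∀ b ∈ K, a + b ∈ K)
    (hKcone : ∀ t : ℝ, 0 ≤ t → ∀ y ∈ K, t • y ∈ K) (hKpt : K ∩ (-K) = {0})
    (he : e ∈ interior K)
    (hconv : ∀ x₁ x₂ : X, (F x₁).Nonempty → (F x₂).Nonempty → ∀ t : ℝ, t ∈ Set.Ioo (0:ℝ) 1 →
      t • F x₁ + (1 - t) • F x₂ ⊆ F (t • x₁ + (1 - t) • x₂) + K)
    {xbar x₁ x₂ : X} {t : ℝ} (ht : t ∈ Ioo (0 : ℝ) 1) {r s : ℝ}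
    (h₁ : flow K e F xbar x₁ ≤ r) (h₂ : flow K e F xbar x₂ ≤ s) :
    flow K e F xbar (t • x₁ + (1 - t) • x₂) ≤ ↑(t * r + (1 - t) * s) :=
  iSup₂_le fun yb hyb => glow_convex_combination_le hKcl hKadd hKcone hKpt he hconv ht
    ((le_iSup₂ (f := fun yb _ => glow K e F x₁ yb) yb hyb).trans h₁)
    ((le_iSup₂ (f := fun yb _ => glow K e F x₂ yb) yb hyb).trans h₂)

lemma convex_epigraph_flow (hKcl : IsClosed K) (hKadd : ∀ a ∈ K, ∀ b ∈ K, a + b ∈ K)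
    (hKcone : ∀ t : ℝ, 0 ≤ t → ∀ y ∈ K, t • y ∈ K) (hKpt : K ∩ (-K) = {0})
    (he : e ∈ interior K)
    (hconv : ∀ x₁ x₂ : X, (F x₁).Nonempty → (F x₂).Nonempty → ∀ t : ℝ, t ∈ Set.Ioo (0:ℝ) 1 →
      t • F x₁ + (1 - t) • F x₂ ⊆ F (t • x₁ + (1 - t) • x₂) + K) (xbar : X) :
    Convex ℝ {p : X × ℝ | flow K e F xbar p.1 ≤ p.2} := by
  refine convex_iff_forall_pos.mpr fun p hp q hq a b ha hb hab => ?_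
  obtain rfl : b = 1 - a := by linarith
  exact flow_convex_combination_le hKcl hKadd hKcone hKpt he hconv ⟨ha, by linarith⟩ hp hq

lemma flow_le_two_mul_of_lBounded (hKadd : ∀ a ∈ K, ∀ b ∈ K, a + b ∈ K)
    (hKcone : ∀ t : ℝ, 0 ≤ t → ∀ y ∈ K, t • y ∈ K) (hKpt : K ∩ (-K) = {0})
    (he : e ∈ interior K) {μ : ℝ} (hμ : 0 ≤ μ) {xbar x : X}
    (hxbar : (F xbar ∩ {y : Y | y + μ • e ∈ K ∧ μ • e - y ∈ K}) + K = F xbar + K)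
    (hx : (F x ∩ {y : Y | y + μ • e ∈ K ∧ μ • e - y ∈ K}) + K = F x + K)
    (hFx : (F x).Nonempty) :
    flow K e F xbar x ≤ ↑(2 * μ) := by
  have hK0 : (0 : Y) ∈ K := by simpa using hKcone 0 le_rfl e (interior_subset he)
  obtain ⟨y, hy⟩ := hFx
  obtain ⟨y', ⟨hy'F, -, hy'μ⟩, -⟩ := mem_inter_add_of_inter_add_eq hx hK0 hy
  refine iSup₂_le fun yb hyb => (iInf₂_le y' hy'F).trans (EReal.coe_le_coe_iff.mpr ?_)
  obtain ⟨yb', ⟨-, hyb'μ, -⟩, k, hk, rfl⟩ := mem_inter_add_of_inter_add_eq hxbar hK0 hyb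
  refine psiE_le_of_smul_sub_mem hKadd hKcone hKpt he (by positivity) ?_
  convert hKadd _ (hKadd _ hy'μ _ hyb'μ) _ hk using 1
  module

lemma neg_two_mul_le_flow_of_lBounded (hKcl : IsClosed K) (hKadd : ∀ a ∈ K, ∀ b ∈ K, a + b ∈ K)
    (hKcone : ∀ t : ℝ, 0 ≤ t → ∀ y ∈ K, t • y ∈ K) (hKpt : K ∩ (-K) = {0})
    (he : e ∈ interior K) {μ : ℝ} (hμ : 0 ≤ μ) {xbar x : X}
    (hxbar : (F xbar ∩ {y : Y | y + μ • e ∈ K ∧ μ • e - y ∈ K}) + K = F xbar + K)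
    (hx : (F x ∩ {y : Y | y + μ • e ∈ K ∧ μ • e - y ∈ K}) + K = F x + K)
    (hFxbar : (F xbar).Nonempty) :
    ↑(-(2 * μ)) ≤ flow K e F xbar x := by
  have hK0 : (0 : Y) ∈ K := by simpa using hKcone 0 le_rfl e (interior_subset he)
  obtain ⟨yb, hyb⟩ := hFxbar
  obtain ⟨yb', ⟨hyb'F, -, hyb'μ⟩, -⟩ := mem_inter_add_of_inter_add_eq hxbar hK0 hyb
  refine le_iSup₂_of_le (f := fun yb _ => glow K e F x yb) yb' hyb'F
    (le_iInf₂ fun y hy => EReal.coe_le_coe_iff.mpr ?_)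
  obtain ⟨y', ⟨-, hy'μ, -⟩, k, hk, rfl⟩ := mem_inter_add_of_inter_add_eq hx hK0 hy
  calc -(2 * μ) ≤ psiE K e (y' - yb') := by
        refine neg_le_psiE_of_add_smul_mem hKadd hKcone hKpt he (by positivity) ?_
        convert hKadd _ hy'μ _ hyb'μ using 1
        module
    _ ≤ psiE K e (y' + k - yb') := by
        rw [add_sub_right_comm]
        exact psiE_le_psiE_add hKcl hKadd hKcone hKpt he _ hk

end ScalarizingFunctional

theorem stmt5_general
    {X Y : Type*} [NormedAddCommGroup X] [NormedSpace ℝ X]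
    [NormedAddCommGroup Y] [NormedSpace ℝ Y]
    (K : Set Y) (e : Y) (F : X → Set Y) (Ω : Set X) (xbar : X)
    (hKcl : IsClosed K) (hKcv : Convex ℝ K)
    (hKcone : ∀ t : ℝ, 0 ≤ t → ∀ y ∈ K, t • y ∈ K)
    (hKpt : K ∩ (-K) = {0})
    (he : e ∈ interior K)
    (hΩdom : Ω ⊆ interior {x | (F x).Nonempty})
    (hxΩ : xbar ∈ Ω)
    (hconv : ∀ x₁ x₂ : X, (F x₁).Nonempty → (F x₂).Nonempty → ∀ t : ℝ, t ∈ Set.Ioo (0:ℝ) 1 →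
      t • F x₁ + (1 - t) • F x₂ ⊆ F (t • x₁ + (1 - t) • x₂) + K) :
    Convex ℝ {p : X × ℝ | flow K e F xbar p.1 ≤ (p.2 : EReal)} ∧
    ((∃ μ > (0:ℝ), ∃ U ∈ 𝓝 xbar, ∀ x ∈ U,
        (F x ∩ {y : Y | y + μ • e ∈ K ∧ μ • e - y ∈ K}) + K = F x + K) →
      xbar ∈ interior {x : X | flow K e F xbar x < ⊤} ∧
      flow K e F xbar xbar ≠ ⊥ ∧ flow K e F xbar xbar ≠ ⊤ ∧
      ContinuousAt (flow K e F xbar) xbar) := by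
  have hKadd : ∀ a ∈ K, ∀ b ∈ K, a + b ∈ K := fun a ha b hb =>
    add_mem_of_convex_of_smul_mem hKcv hKcone ha hb
  have hepi := convex_epigraph_flow hKcl hKadd hKcone hKpt he hconv xbar
  refine ⟨hepi, fun ⟨μ, hμ, U, hU, hlb⟩ => ?_⟩
  have hdom : {x | (F x).Nonempty} ∈ 𝓝 xbar := mem_interior_iff_mem_nhds.mp (hΩdom hxΩ)
  have hFxbar : xbar ∈ {x | (F x).Nonempty} := mem_of_mem_nhds hdom
  have hxbar := hlb xbar (mem_of_mem_nhds hU)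
  have hfin : ∀ᶠ x in 𝓝 xbar, flow K e F xbar x ≠ ⊥ ∧ flow K e F xbar x ≤ ↑(2 * μ) := by
    filter_upwards [hU, hdom] with x hxU hxF
    exact ⟨ne_bot_of_le_ne_bot (EReal.coe_ne_bot _) (neg_two_mul_le_flow_of_lBounded hKcl hKadd
        hKcone hKpt he hμ.le hxbar (hlb x hxU) hFxbar),
      flow_le_two_mul_of_lBounded hKadd hKcone hKpt he hμ.le hxbar (hlb x hxU) hxF⟩
  obtain ⟨hbot, hle⟩ := hfin.self_of_nhds
  exact ⟨mem_interior_iff_mem_nhds.mpr (hfin.mono fun x hx => hx.2.trans_lt (EReal.coe_lt_top _)),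
    hbot, ne_top_of_le_ne_top (EReal.coe_ne_top _) hle, continuousAt_of_convex_epigraph hepi hfin⟩

/-- if F is ⪯ˡ_K-convex then f_{l,x̄} is convex (epigraph convexity); if moreover
F is locally l-bounded at x̄, then x̄ lies in the interior of the effective domain of f_{l,x̄}
and f_{l,x̄} is finite and continuous at x̄. -/
theorem stmt5
    {X Y : Type*} [NormedAddCommGroup X] [NormedSpace ℝ X] [CompleteSpace X]
    [NormedAddCommGroup Y] [NormedSpace ℝ Y] [CompleteSpace Y]
    (K : Set Y) (e : Y) (F : X → Set Y) (Ω : Set X) (xbar : X)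
    (hKcl : IsClosed K) (hKcv : Convex ℝ K)
    (hKcone : ∀ t : ℝ, 0 ≤ t → ∀ y ∈ K, t • y ∈ K)
    (hKpt : K ∩ (-K) = {0})
    (he : e ∈ interior K)
    (hΩne : Ω.Nonempty) (hΩcl : IsClosed Ω)
    (hΩdom : Ω ⊆ interior {x | (F x).Nonempty})
    (hxΩ : xbar ∈ Ω)
    (hconv : ∀ x₁ x₂ : X, (F x₁).Nonempty → (F x₂).Nonempty → ∀ t : ℝ, t ∈ Set.Ioo (0:ℝ) 1 →
      t • F x₁ + (1 - t) • F x₂ ⊆ F (t • x₁ + (1 - t) • x₂) + K) :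
    Convex ℝ {p : X × ℝ | flow K e F xbar p.1 ≤ (p.2 : EReal)} ∧
    ((∃ μ > (0:ℝ), ∃ U ∈ 𝓝 xbar, ∀ x ∈ U,
        (F x ∩ {y : Y | y + μ • e ∈ K ∧ μ • e - y ∈ K}) + K = F x + K) →
      xbar ∈ interior {x : X | flow K e F xbar x < ⊤} ∧
      flow K e F xbar xbar ≠ ⊥ ∧ flow K e F xbar xbar ≠ ⊤ ∧
      ContinuousAt (flow K e F xbar) xbar) :=
  stmt5_general K e F Ω xbar hKcl hKcv hKcone hKpt he hΩdom hxΩ hconv
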